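/- Let R be a nonzero commutative ring with identity and let n ≥ 2. Then there exist distinct vertices A and B of APOḠ(M_n(R)) that are not adjacent (i.e., AB ≠ 0 and BA ≠ 0); consequently diam(APOḠ(M_n(R))) ≥ 2. -/

import Mathlib

open scoped Pointwise

/-- `I` is a left ideal of the ring `R`: an additive subgroup with `R·I ⊆ I`. -/
def IsLeftIdeal (R : Type*) [Ring R] (I : AddSubgroup R) : Prop :=
  ∀ r : R, ∀ x ∈ I, r * x ∈ I

/-- `I` is a right ideal of the ring `R`: an additive subgroup with `I·R ⊆ I`. -/
def IsRightIdeal (R : Type*) [Ring R] (I : AddSubgroup R) : Prop :=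
  ∀ r : R, ∀ x ∈ I, x * r ∈ I

/-- `I` is a one-sided (left or right) ideal of `R`. -/
def IsOneSidedIdeal (R : Type*) [Ring R] (I : AddSubgroup R) : Prop :=
  IsLeftIdeal R I ∨ IsRightIdeal R I

/-- `IPO(R)`: the set of all products `I*J` of two one-sided ideals of `R`.
Here `I * J` is the additive subgroup generated by `{a*b : a ∈ I, b ∈ J}`
(the pointwise product of additive subgroups). -/
def IPO (R : Type*) [Ring R] : Set (AddSubgroup R) :=
  {A | ∃ I J : AddSubgroup R, IsOneSidedIdeal R I ∧ IsOneSidedIdeal R J ∧ A = I * J}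

/-- `A` is a vertex of `APOG(R) = Γ(IPO(R))`: a nonzero element of `IPO(R)` that is a
one-sided zero-divisor of the semigroup `IPO(R)`. -/
def APOGVertex (R : Type*) [Ring R] (A : AddSubgroup R) : Prop :=
  A ∈ IPO R ∧ A ≠ ⊥ ∧ ∃ B ∈ IPO R, B ≠ ⊥ ∧ (A * B = ⊥ ∨ B * A = ⊥)

/-- The directed edge `A → B` of `APOG(R)`: both are vertices, `A ≠ B` and `A*B = 0`. -/
def APOGEdge (R : Type*) [Ring R] (A B : AddSubgroup R) : Prop :=
  APOGVertex R A ∧ APOGVertex R B ∧ A ≠ B ∧ A * B = ⊥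

/-- The undirected graph `APOḠ(R) = Γ̄(IPO(R))` on the vertex set of `APOG(R)`:
distinct vertices `A, B` are adjacent iff `A*B = 0` or `B*A = 0`. -/
def apogGraph (R : Type*) [Ring R] : SimpleGraph {A : AddSubgroup R // APOGVertex R A} where
  Adj A B := A ≠ B ∧ ((A : AddSubgroup R) * B = ⊥ ∨ (B : AddSubgroup R) * A = ⊥)
  symm := ⟨by rintro A B ⟨hAB, h⟩; exact ⟨hAB.symm, h.symm⟩⟩
  loopless := ⟨by rintro A ⟨h, -⟩; exact h rfl⟩

/-!
In any ring `S`, let `e` be a nonzero idempotent and `f` an element with `e f = f e = 0`.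
The principal left ideals `S e` and `S f` lie in `IPO(S)` (as `S · S e`), and they are vertices
of `APOḠ(S)` because `S e · f S = 0` and `S f · e S = 0`. They are distinct, since `e ∈ S f`
would give `e = e² ∈ S f e = 0`, and they are not adjacent as soon as `e u f ≠ 0` and
`f v e ≠ 0` for some `u, v`. In `Mₙ(R)` with `n ≥ 2` take `e = E_ii`, `f = E_jj`, `u = E_ij`,
`v = E_ji` for `i ≠ j`.
-/

theorem SimpleGraph.two_le_ediam_of_not_adj {V : Type*} {G : SimpleGraph V} {u v : V}
    (huv : u ≠ v) (h : ¬ G.Adj u v) : 2 ≤ G.ediam := by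
  have h1 : 1 < G.edist u v :=
    not_le.mp fun hle => (G.edist_le_one_iff_adj_or_eq.mp hle).elim h huv
  calc (2 : ℕ∞) = 1 + 1 := one_add_one_eq_two.symm
    _ ≤ G.edist u v := Order.add_one_le_of_lt h1
    _ ≤ G.ediam := G.edist_le_ediam

namespace AddSubgroup

variable {S : Type*} [NonUnitalNonAssocRing S] {A B C : AddSubgroup S}

theorem mul_mem_mul {a b : S} (ha : a ∈ A) (hb : b ∈ B) : a * b ∈ A * B :=
  AddSubmonoid.mul_mem_mul ha hb

theorem mul_le_iff : A * B ≤ C ↔ ∀ a ∈ A, ∀ b ∈ B, a * b ∈ C :=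
  AddSubmonoid.mul_le

theorem ne_bot_of_mem_of_ne_zero {a : S} (ha : a ∈ A) (ha0 : a ≠ 0) : A ≠ ⊥ :=
  fun h => ha0 (by rwa [h, mem_bot] at ha)

theorem mul_ne_bot_of_mul_ne_zero {a b : S} (ha : a ∈ A) (hb : b ∈ B) (hab : a * b ≠ 0) :
    A * B ≠ ⊥ :=
  ne_bot_of_mem_of_ne_zero (mul_mem_mul ha hb) hab

end AddSubgroup

section PrincipalIdeals

variable {S : Type*} [Ring S]

def principalLeftIdeal (e : S) : AddSubgroup S :=
  (AddMonoidHom.mulRight e).range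

def principalRightIdeal (e : S) : AddSubgroup S :=
  (AddMonoidHom.mulLeft e).range

theorem mem_principalLeftIdeal {e x : S} : x ∈ principalLeftIdeal e ↔ ∃ s, s * e = x :=
  Iff.rfl

theorem mul_mem_principalLeftIdeal (s e : S) : s * e ∈ principalLeftIdeal e :=
  ⟨s, rfl⟩

theorem mul_mem_principalRightIdeal (e s : S) : e * s ∈ principalRightIdeal e :=
  ⟨s, rfl⟩

theorem self_mem_principalLeftIdeal (e : S) : e ∈ principalLeftIdeal e := by
  simpa using mul_mem_principalLeftIdeal 1 e

theorem self_mem_principalRightIdeal (e : S) : e ∈ principalRightIdeal e := by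
  simpa using mul_mem_principalRightIdeal e 1

theorem isLeftIdeal_principalLeftIdeal (e : S) : IsLeftIdeal S (principalLeftIdeal e) := by
  rintro r _ ⟨s, rfl⟩
  simpa [mul_assoc] using mul_mem_principalLeftIdeal (r * s) e

theorem isRightIdeal_principalRightIdeal (e : S) : IsRightIdeal S (principalRightIdeal e) := by
  rintro r _ ⟨s, rfl⟩
  simpa [mul_assoc] using mul_mem_principalRightIdeal e (s * r)

theorem principalLeftIdeal_mul_principalRightIdeal_eq_bot {e f : S} (hef : e * f = 0) :
    principalLeftIdeal e * principalRightIdeal f = ⊥ := by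
  refine eq_bot_iff.mpr (AddSubgroup.mul_le_iff.mpr ?_)
  rintro _ ⟨s, rfl⟩ _ ⟨t, rfl⟩
  simp [mul_assoc, ← mul_assoc e f, hef]

theorem principalLeftIdeal_ne_of_mul_eq_zero {e f : S} (he : IsIdempotentElem e) (he0 : e ≠ 0)
    (hfe : f * e = 0) : principalLeftIdeal e ≠ principalLeftIdeal f := by
  intro h
  obtain ⟨s, hs⟩ := mem_principalLeftIdeal.mp (h ▸ self_mem_principalLeftIdeal e)
  apply he0
  calc e = e * e := he.eq.symm
    _ = s * f * e := by rw [hs]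
    _ = 0 := by rw [mul_assoc, hfe, mul_zero]

end PrincipalIdeals

section APOG

variable {S : Type*} [Ring S]

theorem IsLeftIdeal.mem_IPO {I : AddSubgroup S} (hI : IsLeftIdeal S I) : I ∈ IPO S := by
  refine ⟨⊤, I, Or.inl fun _ _ _ => trivial, Or.inl hI, le_antisymm ?_ ?_⟩
  · intro x hx
    simpa using AddSubgroup.mul_mem_mul (AddSubgroup.mem_top 1) hx
  · exact AddSubgroup.mul_le_iff.mpr fun r _ x hx => hI r x hx

theorem IsRightIdeal.mem_IPO {I : AddSubgroup S} (hI : IsRightIdeal S I) : I ∈ IPO S := by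
  refine ⟨I, ⊤, Or.inr hI, Or.inr fun _ _ _ => trivial, le_antisymm ?_ ?_⟩
  · intro x hx
    simpa using AddSubgroup.mul_mem_mul hx (AddSubgroup.mem_top 1)
  · exact AddSubgroup.mul_le_iff.mpr fun x hx r _ => hI r x hx

theorem apogVertex_principalLeftIdeal {e f : S} (he : e ≠ 0) (hf : f ≠ 0) (hef : e * f = 0) :
    APOGVertex S (principalLeftIdeal e) :=
  ⟨(isLeftIdeal_principalLeftIdeal e).mem_IPO,
    AddSubgroup.ne_bot_of_mem_of_ne_zero (self_mem_principalLeftIdeal e) he,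
    principalRightIdeal f, (isRightIdeal_principalRightIdeal f).mem_IPO,
    AddSubgroup.ne_bot_of_mem_of_ne_zero (self_mem_principalRightIdeal f) hf,
    Or.inl (principalLeftIdeal_mul_principalRightIdeal_eq_bot hef)⟩

theorem principalLeftIdeal_mul_principalLeftIdeal_ne_bot {e f u : S} (h : e * u * f ≠ 0) :
    principalLeftIdeal e * principalLeftIdeal f ≠ ⊥ :=
  AddSubgroup.mul_ne_bot_of_mul_ne_zero (self_mem_principalLeftIdeal e)
    (mul_mem_principalLeftIdeal u f) (by rwa [← mul_assoc])

theorem exists_apogVertex_not_adj {e f u v : S} (he : IsIdempotentElem e)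
    (hef : e * f = 0) (hfe : f * e = 0) (heuf : e * u * f ≠ 0) (hfve : f * v * e ≠ 0) :
    ∃ A B : AddSubgroup S, APOGVertex S A ∧ APOGVertex S B ∧
      A ≠ B ∧ A * B ≠ ⊥ ∧ B * A ≠ ⊥ := by
  have he0 : e ≠ 0 := by rintro rfl; simp at heuf
  have hf0 : f ≠ 0 := by rintro rfl; simp at heuf
  exact ⟨principalLeftIdeal e, principalLeftIdeal f, apogVertex_principalLeftIdeal he0 hf0 hef,
    apogVertex_principalLeftIdeal hf0 he0 hfe, principalLeftIdeal_ne_of_mul_eq_zero he he0 hfe,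
    principalLeftIdeal_mul_principalLeftIdeal_ne_bot heuf,
    principalLeftIdeal_mul_principalLeftIdeal_ne_bot hfve⟩

theorem two_le_ediam_apogGraph {A B : AddSubgroup S} (hA : APOGVertex S A) (hB : APOGVertex S B)
    (hne : A ≠ B) (hAB : A * B ≠ ⊥) (hBA : B * A ≠ ⊥) : 2 ≤ (apogGraph S).ediam :=
  SimpleGraph.two_le_ediam_of_not_adj (u := ⟨A, hA⟩) (v := ⟨B, hB⟩)
    (fun h => hne (congrArg Subtype.val h)) fun ⟨_, h⟩ => h.elim hAB hBA

end APOG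

theorem Matrix.exists_apogVertex_not_adj {ι R : Type*} [Fintype ι] [DecidableEq ι] [Ring R]
    [Nontrivial R] {i j : ι} (hij : i ≠ j) :
    ∃ A B : AddSubgroup (Matrix ι ι R), APOGVertex _ A ∧ APOGVertex _ B ∧
      A ≠ B ∧ A * B ≠ ⊥ ∧ B * A ≠ ⊥ := by
  have single_ne_zero (k l : ι) : single k l (1 : R) ≠ 0 :=
    ne_of_apply_ne (fun M => M k l) (by simp)
  refine _root_.exists_apogVertex_not_adj (e := single i i 1) (f := single j j 1)
    (u := single i j 1) (v := single j i 1) ?_ ?_ ?_ ?_ ?_ <;>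
    simp [IsIdempotentElem, hij, hij.symm, single_ne_zero]

/-- For a nonzero commutative ring `R` and `n ≥ 2` there are distinct
non-adjacent vertices in `APOḠ(Mₙ(R))`; consequently `diam(APOḠ(Mₙ(R))) ≥ 2`. -/
theorem matrix_apog_diam_ge_two (R : Type*) [CommRing R] [Nontrivial R]
    (n : ℕ) (hn : 2 ≤ n) :
    (∃ A B : AddSubgroup (Matrix (Fin n) (Fin n) R),
      APOGVertex (Matrix (Fin n) (Fin n) R) A ∧
      APOGVertex (Matrix (Fin n) (Fin n) R) B ∧
      A ≠ B ∧ A * B ≠ ⊥ ∧ B * A ≠ ⊥) ∧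
    2 ≤ (apogGraph (Matrix (Fin n) (Fin n) R)).ediam := by
  obtain ⟨i, j, hij⟩ :=
    Fintype.exists_pair_of_one_lt_card (α := Fin n) (by rw [Fintype.card_fin]; omega)
  obtain ⟨A, B, hA, hB, hne, hAB, hBA⟩ := Matrix.exists_apogVertex_not_adj (R := R) hij
  exact ⟨⟨A, B, hA, hB, hne, hAB, hBA⟩, two_le_ediam_apogGraph hA hB hne hAB hBA⟩
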